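/- For every finite simple graph G without isolated vertices, without open twins and without closed twins, G has an FTD-code and the FTD-number of G is at most the F-number of G plus one, i.e., γ^FTD(G) ≤ γ^F(G) + 1. -/

import Mathlib

open Finset

namespace SepDom

variable {V : Type*} [Fintype V] [DecidableEq V]

/-- The closed neighborhood `N[v]` of a vertex as a `Finset`. -/
def closedNbhd (G : SimpleGraph V) [DecidableRel G.Adj] (v : V) : Finset V :=
  insert v (G.neighborFinset v)

/-- `C` is a dominating set: `N[v] ∩ C ≠ ∅` for all `v`. -/
def IsDomSet (G : SimpleGraph V) [DecidableRel G.Adj] (C : Finset V) : Prop :=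
  ∀ v : V, (closedNbhd G v ∩ C).Nonempty

/-- `C` is a total-dominating set: `N(v) ∩ C ≠ ∅` for all `v`. -/
def IsTotalDomSet (G : SimpleGraph V) [DecidableRel G.Adj] (C : Finset V) : Prop :=
  ∀ v : V, (G.neighborFinset v ∩ C).Nonempty

/-- `C` is a locating set (L-set): the sets `N(v) ∩ C`, `v ∉ C`, are pairwise distinct. -/
def IsLSet (G : SimpleGraph V) [DecidableRel G.Adj] (C : Finset V) : Prop :=
  ∀ u ∉ C, ∀ v ∉ C, G.neighborFinset u ∩ C = G.neighborFinset v ∩ C → u = v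

/-- `C` is an open-separating set (O-set): the sets `N(v) ∩ C` are pairwise distinct. -/
def IsOSet (G : SimpleGraph V) [DecidableRel G.Adj] (C : Finset V) : Prop :=
  ∀ u v : V, G.neighborFinset u ∩ C = G.neighborFinset v ∩ C → u = v

/-- `C` is a closed-separating set (I-set): the sets `N[v] ∩ C` are pairwise distinct. -/
def IsISet (G : SimpleGraph V) [DecidableRel G.Adj] (C : Finset V) : Prop :=
  ∀ u v : V, closedNbhd G u ∩ C = closedNbhd G v ∩ C → u = v

/-- `C` is a full-separating set (F-set): both open- and closed-separating. -/
def IsFSet (G : SimpleGraph V) [DecidableRel G.Adj] (C : Finset V) : Prop :=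
  IsOSet G C ∧ IsISet G C

/-- `G` has open twins: distinct non-adjacent vertices with equal open neighborhoods. -/
def HasOpenTwins (G : SimpleGraph V) [DecidableRel G.Adj] : Prop :=
  ∃ u v : V, u ≠ v ∧ ¬ G.Adj u v ∧ G.neighborFinset u = G.neighborFinset v

/-- `G` has closed twins: distinct adjacent vertices with equal closed neighborhoods. -/
def HasClosedTwins (G : SimpleGraph V) [DecidableRel G.Adj] : Prop :=
  ∃ u v : V, u ≠ v ∧ G.Adj u v ∧ closedNbhd G u = closedNbhd G v

/-- `G` has an isolated vertex: a vertex with empty open neighborhood. -/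
def HasIsolated (G : SimpleGraph V) [DecidableRel G.Adj] : Prop :=
  ∃ v : V, G.neighborFinset v = ∅

/-- The L-number: minimum cardinality of an L-set. -/
noncomputable def lNum (G : SimpleGraph V) [DecidableRel G.Adj] : ℕ :=
  sInf {n | ∃ C : Finset V, IsLSet G C ∧ C.card = n}

/-- The O-number: minimum cardinality of an O-set. -/
noncomputable def oNum (G : SimpleGraph V) [DecidableRel G.Adj] : ℕ :=
  sInf {n | ∃ C : Finset V, IsOSet G C ∧ C.card = n}

/-- The I-number: minimum cardinality of an I-set. -/
noncomputable def iNum (G : SimpleGraph V) [DecidableRel G.Adj] : ℕ :=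
  sInf {n | ∃ C : Finset V, IsISet G C ∧ C.card = n}

/-- The F-number: minimum cardinality of an F-set. -/
noncomputable def fNum (G : SimpleGraph V) [DecidableRel G.Adj] : ℕ :=
  sInf {n | ∃ C : Finset V, IsFSet G C ∧ C.card = n}

/-- The LD-number: minimum cardinality of an LD-code. -/
noncomputable def ldNum (G : SimpleGraph V) [DecidableRel G.Adj] : ℕ :=
  sInf {n | ∃ C : Finset V, IsDomSet G C ∧ IsLSet G C ∧ C.card = n}

/-- The OD-number: minimum cardinality of an OD-code. -/
noncomputable def odNum (G : SimpleGraph V) [DecidableRel G.Adj] : ℕ :=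
  sInf {n | ∃ C : Finset V, IsDomSet G C ∧ IsOSet G C ∧ C.card = n}

/-- The ID-number: minimum cardinality of an ID-code. -/
noncomputable def idNum (G : SimpleGraph V) [DecidableRel G.Adj] : ℕ :=
  sInf {n | ∃ C : Finset V, IsDomSet G C ∧ IsISet G C ∧ C.card = n}

/-- The FD-number: minimum cardinality of an FD-code. -/
noncomputable def fdNum (G : SimpleGraph V) [DecidableRel G.Adj] : ℕ :=
  sInf {n | ∃ C : Finset V, IsDomSet G C ∧ IsFSet G C ∧ C.card = n}

/-- The LTD-number: minimum cardinality of an LTD-code. -/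
noncomputable def ltdNum (G : SimpleGraph V) [DecidableRel G.Adj] : ℕ :=
  sInf {n | ∃ C : Finset V, IsTotalDomSet G C ∧ IsLSet G C ∧ C.card = n}

/-- The OTD-number: minimum cardinality of an OTD-code. -/
noncomputable def otdNum (G : SimpleGraph V) [DecidableRel G.Adj] : ℕ :=
  sInf {n | ∃ C : Finset V, IsTotalDomSet G C ∧ IsOSet G C ∧ C.card = n}

/-- The ITD-number: minimum cardinality of an ITD-code. -/
noncomputable def itdNum (G : SimpleGraph V) [DecidableRel G.Adj] : ℕ :=
  sInf {n | ∃ C : Finset V, IsTotalDomSet G C ∧ IsISet G C ∧ C.card = n}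

/-- The FTD-number: minimum cardinality of an FTD-code. -/
noncomputable def ftdNum (G : SimpleGraph V) [DecidableRel G.Adj] : ℕ :=
  sInf {n | ∃ C : Finset V, IsTotalDomSet G C ∧ IsFSet G C ∧ C.card = n}

end SepDom

/-! Without twins the whole vertex set is an F-set, so a minimum F-set `C` exists. Being
open-separating, `C` leaves at most one vertex `v` with `N(v) ∩ C = ∅`; adding one neighbour
of `v` (there is one, as `v` is not isolated) makes `C` total-dominating, and supersets of
F-sets are F-sets. -/

namespace SepDom

lemma inter_eq_inter_of_subset {α : Type*} [DecidableEq α] {s t C D : Finset α} (h : C ⊆ D)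
    (hst : s ∩ D = t ∩ D) : s ∩ C = t ∩ C := by
  rw [← inter_eq_right.mpr h, ← inter_assoc, hst, inter_assoc]

variable {V : Type*} [Fintype V] [DecidableEq V] {G : SimpleGraph V} [DecidableRel G.Adj]
  {C D : Finset V}

lemma IsOSet.mono (hC : IsOSet G C) (h : C ⊆ D) : IsOSet G D :=
  fun u v huv => hC u v (inter_eq_inter_of_subset h huv)

lemma IsISet.mono (hC : IsISet G C) (h : C ⊆ D) : IsISet G D :=
  fun u v huv => hC u v (inter_eq_inter_of_subset h huv)

lemma IsFSet.mono (hC : IsFSet G C) (h : C ⊆ D) : IsFSet G D :=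
  ⟨hC.1.mono h, hC.2.mono h⟩

lemma isOSet_univ (hOT : ¬ HasOpenTwins G) : IsOSet G univ := by
  intro u v h
  simp only [inter_univ] at h
  by_contra hne
  by_cases hadj : G.Adj u v
  · have hu : u ∈ G.neighborFinset v := by simpa using hadj.symm
    simp [← h] at hu
  · exact hOT ⟨u, v, hne, hadj, h⟩

lemma isISet_univ (hCT : ¬ HasClosedTwins G) : IsISet G univ := by
  intro u v h
  simp only [inter_univ] at h
  by_contra hne
  by_cases hadj : G.Adj u v
  · exact hCT ⟨u, v, hne, hadj, h⟩
  · have hu : u ∈ closedNbhd G v := h ▸ mem_insert_self u _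
    simp only [closedNbhd, mem_insert, SimpleGraph.mem_neighborFinset] at hu
    exact hu.elim hne fun h' => hadj h'.symm

lemma isFSet_univ (hOT : ¬ HasOpenTwins G) (hCT : ¬ HasClosedTwins G) : IsFSet G univ :=
  ⟨isOSet_univ hOT, isISet_univ hCT⟩

lemma exists_isFSet_card_eq_fNum (hOT : ¬ HasOpenTwins G) (hCT : ¬ HasClosedTwins G) :
    ∃ C : Finset V, IsFSet G C ∧ C.card = fNum G :=
  Nat.sInf_mem (s := {n | ∃ C : Finset V, IsFSet G C ∧ C.card = n})
    ⟨_, univ, isFSet_univ hOT hCT, rfl⟩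

lemma IsOSet.exists_isTotalDomSet_superset_card_le (hC : IsOSet G C) (hIso : ¬ HasIsolated G) :
    ∃ D : Finset V, C ⊆ D ∧ D.card ≤ C.card + 1 ∧ IsTotalDomSet G D := by
  by_cases hT : IsTotalDomSet G C
  · exact ⟨C, Subset.rfl, Nat.le_succ _, hT⟩
  obtain ⟨v₀, hv₀⟩ : ∃ v₀, G.neighborFinset v₀ ∩ C = ∅ := by
    simpa [IsTotalDomSet, not_nonempty_iff_eq_empty] using hT
  obtain ⟨w, hw⟩ : (G.neighborFinset v₀).Nonempty :=
    nonempty_iff_ne_empty.mpr fun h => hIso ⟨v₀, h⟩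
  refine ⟨insert w C, subset_insert _ _, card_insert_le _ _, fun v => ?_⟩
  by_cases hv : (G.neighborFinset v ∩ C).Nonempty
  · exact hv.mono (inter_subset_inter_left (subset_insert _ _))
  · obtain rfl : v = v₀ := hC v v₀ (by rw [not_nonempty_iff_eq_empty.mp hv, hv₀])
    exact ⟨w, mem_inter.mpr ⟨hw, mem_insert_self _ _⟩⟩

end SepDom

open SepDom

theorem ftd_le_f_add_one {V : Type*} [Fintype V] [DecidableEq V]
    (G : SimpleGraph V) [DecidableRel G.Adj]
    (hIso : ¬ HasIsolated G) (hOT : ¬ HasOpenTwins G) (hCT : ¬ HasClosedTwins G) :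
    (∃ C : Finset V, IsTotalDomSet G C ∧ IsFSet G C) ∧ ftdNum G ≤ fNum G + 1 := by
  obtain ⟨C, hC, hcard⟩ := exists_isFSet_card_eq_fNum hOT hCT
  obtain ⟨D, hCD, hDcard, hD⟩ := hC.1.exists_isTotalDomSet_superset_card_le hIso
  have hDF : IsFSet G D := hC.mono hCD
  refine ⟨⟨D, hD, hDF⟩, ?_⟩
  calc ftdNum G ≤ D.card := Nat.sInf_le ⟨D, hD, hDF, rfl⟩
    _ ≤ fNum G + 1 := hcard ▸ hDcard
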